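/- arXiv:2310.06742 — 4 statements merged into one kernel-verified Lean document; each statement's English description precedes it below -/
import Mathlib

section
/- Let X be a nonempty finite set, let g : X → ℝ be a nonnegative likelihood function, and let μ, ν be probability vectors on X whose normalizers N_μ := Σ_{x∈X} g(x)μ(x) and N_ν := Σ_{x∈X} g(x)ν(x) are both strictly positive. Define the posteriors μ̄(x) := g(x)μ(x)/N_μ and ν̄(x) := g(x)ν(x)/N_ν. Then ‖μ̄ − ν̄‖_TV ≤ (1/N_μ) · ( Σ_{x∈X} g(x)·|μ(x) − ν(x)| + |N_μ − N_ν| ). (This is the key filter-update inequality (eq:filter_bound) established in the proof of the paper's Lemma 8.) -/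
/-- The key filter-update inequality: with posteriors
`μ̄(x) = g(x)μ(x)/N_μ` and `ν̄(x) = g(x)ν(x)/N_ν`,
`‖μ̄ − ν̄‖_TV ≤ (1/N_μ)·(Σ_x g(x)·|μ(x) − ν(x)| + |N_μ − N_ν|)`. -/
theorem filter_update_bound
    {X : Type*} [Fintype X] [Nonempty X]
    (g : X → ℝ) (hg : ∀ x, 0 ≤ g x)
    (μ ν : X → ℝ)
    (hμ_nonneg : ∀ x, 0 ≤ μ x) (hμ_sum : ∑ x, μ x = 1)
    (hν_nonneg : ∀ x, 0 ≤ ν x) (hν_sum : ∑ x, ν x = 1)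
    (hNμ : 0 < ∑ x, g x * μ x) (hNν : 0 < ∑ x, g x * ν x) :
    ∑ x, |g x * μ x / (∑ y, g y * μ y) - g x * ν x / (∑ y, g y * ν y)|
      ≤ (1 / (∑ x, g x * μ x)) *
        ((∑ x, g x * |μ x - ν x|) + |(∑ x, g x * μ x) - (∑ x, g x * ν x)|) := by
  set Nμ := ∑ x, g x * μ x with hNμdef
  set Nν := ∑ x, g x * ν x with hNνdef
  have hNμ' : Nμ ≠ 0 := ne_of_gt hNμ
  have hNν' : Nν ≠ 0 := ne_of_gt hNν
  have key : ∀ x, |g x * μ x / Nμ - g x * ν x / Nν|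
      ≤ g x * |μ x - ν x| / Nμ + g x * ν x * |Nν - Nμ| / (Nμ * Nν) := by
    intro x
    have heq : g x * μ x / Nμ - g x * ν x / Nν
        = (g x * μ x - g x * ν x) / Nμ + g x * ν x * (Nν - Nμ) / (Nμ * Nν) := by
      field_simp
      ring
    rw [heq]
    refine (abs_add_le _ _).trans ?_
    have h1 : |(g x * μ x - g x * ν x) / Nμ| = g x * |μ x - ν x| / Nμ := by
      rw [abs_div, abs_of_pos hNμ, ← mul_sub, abs_mul, abs_of_nonneg (hg x)]
    have h2 : |g x * ν x * (Nν - Nμ) / (Nμ * Nν)| = g x * ν x * |Nν - Nμ| / (Nμ * Nν) := by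
      rw [abs_div, abs_mul, abs_of_nonneg (mul_nonneg (hg x) (hν_nonneg x)),
        abs_of_pos (mul_pos hNμ hNν)]
    rw [h1, h2]
  calc ∑ x, |g x * μ x / Nμ - g x * ν x / Nν|
      ≤ ∑ x, (g x * |μ x - ν x| / Nμ + g x * ν x * |Nν - Nμ| / (Nμ * Nν)) :=
        Finset.sum_le_sum fun x _ => key x
    _ = (∑ x, g x * |μ x - ν x|) / Nμ + Nν * |Nν - Nμ| / (Nμ * Nν) := by
        rw [Finset.sum_add_distrib, ← Finset.sum_div]
        congr 1
        rw [← Finset.sum_div, ← Finset.sum_mul, hNνdef]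
    _ = (1 / Nμ) * ((∑ x, g x * |μ x - ν x|) + |Nμ - Nν|) := by
        rw [abs_sub_comm Nν Nμ]
        field_simp
end

section
/- Let X and M' be nonempty finite sets, let O be a stochastic kernel from X to M', and let μ, ν be probability vectors on X such that μ(x) > 0 implies ν(x) > 0 for all x ∈ X (μ is absolutely continuous with respect to ν). For a probability vector ρ on X and m' ∈ M' write N_ρ(m') := Σ_{x∈X} O(m'|x)ρ(x), and when N_ρ(m') > 0 let ρ̄_{m'}(x) := O(m'|x)ρ(x)/N_ρ(m') denote the Bayes posterior (note that N_μ(m') > 0 implies N_ν(m') > 0 under the absolute-continuity assumption, so both posteriors are defined on the relevant terms). Then Σ_{m'∈M' : N_μ(m')>0} N_μ(m') · ‖μ̄_{m'} − ν̄_{m'}‖_TV ≤ ‖μ − ν‖_TV + Σ_{m'∈M'} | Σ_{x∈X} O(m'|x)·(μ(x) − ν(x)) |. (This is the main intermediate inequality derived in the proof of the paper's Lemma 8, before applying the Dobrushin contraction to the second term.) -/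
/-- Intermediate inequality in the proof of the paper's Lemma 8:
`Σ_{m' : N_μ(m')>0} N_μ(m') · ‖μ̄_{m'} − ν̄_{m'}‖_TV
   ≤ ‖μ − ν‖_TV + Σ_{m'} |Σ_x O(m'|x)·(μ(x) − ν(x))|`,
where `N_ρ(m') = Σ_x O(m'|x)ρ(x)` and `ρ̄_{m'}(x) = O(m'|x)ρ(x)/N_ρ(m')`. -/
theorem bayes_posterior_expected_tv_bound
    {X M' : Type*} [Fintype X] [Fintype M'] [Nonempty X] [Nonempty M']
    (O : X → M' → ℝ) (hO_nonneg : ∀ x m', 0 ≤ O x m')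
    (hO_sum : ∀ x, ∑ m', O x m' = 1)
    (μ ν : X → ℝ)
    (hμ_nonneg : ∀ x, 0 ≤ μ x) (hμ_sum : ∑ x, μ x = 1)
    (hν_nonneg : ∀ x, 0 ≤ ν x) (hν_sum : ∑ x, ν x = 1)
    (habs : ∀ x, 0 < μ x → 0 < ν x) :
    ∑ m' ∈ Finset.univ.filter (fun m' : M' => 0 < ∑ x, O x m' * μ x),
        (∑ x, O x m' * μ x) *
          (∑ x, |O x m' * μ x / (∑ y, O y m' * μ y)
                  - O x m' * ν x / (∑ y, O y m' * ν y)|)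
      ≤ (∑ x, |μ x - ν x|) + ∑ m', |∑ x, O x m' * (μ x - ν x)| := by
  have key : ∀ m' ∈ Finset.univ.filter (fun m' : M' => 0 < ∑ x, O x m' * μ x),
      (∑ x, O x m' * μ x) *
        (∑ x, |O x m' * μ x / (∑ y, O y m' * μ y)
                - O x m' * ν x / (∑ y, O y m' * ν y)|)
      ≤ (∑ x, O x m' * |μ x - ν x|) + |∑ x, O x m' * (μ x - ν x)| := by
    intro m' hm'
    rw [Finset.mem_filter] at hm'
    set a := ∑ y, O y m' * μ y with hadef
    set b := ∑ y, O y m' * ν y with hbdef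
    have ha : 0 < a := hm'.2
    have hb : 0 < b := by
      obtain ⟨x, -, hx⟩ := Finset.exists_lt_of_sum_lt
        (show ∑ y : X, (0:ℝ) < ∑ y, O y m' * μ y by simpa using ha)
      have hμx : 0 < μ x := by
        rcases (hμ_nonneg x).lt_or_eq with h | h
        · exact h
        · simp [← h] at hx
      have hOx : 0 < O x m' := by
        rcases (hO_nonneg x m').lt_or_eq with h | h
        · exact h
        · simp [← h] at hx
      exact Finset.sum_pos'
        (fun y _ => mul_nonneg (hO_nonneg y m') (hν_nonneg y))
        ⟨x, Finset.mem_univ x, mul_pos hOx (habs x hμx)⟩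
    have step1 : a * (∑ x, |O x m' * μ x / a - O x m' * ν x / b|)
        = ∑ x, |O x m' * μ x - a / b * (O x m' * ν x)| := by
      rw [Finset.mul_sum]
      refine Finset.sum_congr rfl fun x _ => ?_
      rw [show a * |O x m' * μ x / a - O x m' * ν x / b|
          = |a * (O x m' * μ x / a - O x m' * ν x / b)| by
        rw [abs_mul, abs_of_pos ha]]
      congr 1
      field_simp
    rw [step1]
    have step2 : ∀ x, |O x m' * μ x - a / b * (O x m' * ν x)|
        ≤ O x m' * |μ x - ν x| + O x m' * ν x * (|b - a| / b) := by
      intro x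
      have : O x m' * μ x - a / b * (O x m' * ν x)
          = (O x m' * μ x - O x m' * ν x) + O x m' * ν x * ((b - a) / b) := by
        field_simp; ring
      rw [this]
      refine (abs_add_le _ _).trans (le_of_eq ?_)
      rw [← mul_sub, abs_mul, abs_of_nonneg (hO_nonneg x m'), abs_mul, abs_div,
        abs_of_pos hb, abs_of_nonneg (mul_nonneg (hO_nonneg x m') (hν_nonneg x))]
    calc ∑ x, |O x m' * μ x - a / b * (O x m' * ν x)|
        ≤ ∑ x, (O x m' * |μ x - ν x| + O x m' * ν x * (|b - a| / b)) :=
          Finset.sum_le_sum fun x _ => step2 x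
      _ = (∑ x, O x m' * |μ x - ν x|) + |∑ x, O x m' * (μ x - ν x)| := by
          rw [Finset.sum_add_distrib, ← Finset.sum_mul, ← hbdef]
          congr 1
          rw [mul_div_assoc', mul_comm, mul_div_assoc, div_self hb.ne', mul_one]
          rw [show |b - a| = |a - b| from abs_sub_comm b a]
          congr 1
          rw [hadef, hbdef, ← Finset.sum_sub_distrib]
          exact Finset.sum_congr rfl fun x _ => by ring
  calc ∑ m' ∈ Finset.univ.filter (fun m' : M' => 0 < ∑ x, O x m' * μ x),
        (∑ x, O x m' * μ x) *
          (∑ x, |O x m' * μ x / (∑ y, O y m' * μ y)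
                  - O x m' * ν x / (∑ y, O y m' * ν y)|)
      ≤ ∑ m' ∈ Finset.univ.filter (fun m' : M' => 0 < ∑ x, O x m' * μ x),
          ((∑ x, O x m' * |μ x - ν x|) + |∑ x, O x m' * (μ x - ν x)|) :=
        Finset.sum_le_sum key
    _ ≤ ∑ m', ((∑ x, O x m' * |μ x - ν x|) + |∑ x, O x m' * (μ x - ν x)|) := by
        refine Finset.sum_le_sum_of_subset_of_nonneg (Finset.filter_subset _ _)
          fun m' _ _ => ?_
        exact add_nonneg (Finset.sum_nonneg fun x _ =>
          mul_nonneg (hO_nonneg x m') (abs_nonneg _)) (abs_nonneg _)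
    _ = (∑ x, |μ x - ν x|) + ∑ m', |∑ x, O x m' * (μ x - ν x)| := by
        rw [Finset.sum_add_distrib]
        congr 1
        rw [Finset.sum_comm]
        refine Finset.sum_congr rfl fun x _ => ?_
        rw [← Finset.sum_mul, hO_sum x, one_mul]
end

section
/- Let X and M' be nonempty finite sets, let O be a stochastic kernel from X to M' with Dobrushin coefficient δ(O), and let μ, ν be probability vectors on X such that μ(x) > 0 implies ν(x) > 0 for all x ∈ X. With N_ρ(m') := Σ_{x∈X} O(m'|x)ρ(x) and Bayes posteriors ρ̄_{m'}(x) := O(m'|x)ρ(x)/N_ρ(m') (defined when N_ρ(m') > 0), we have Σ_{m'∈M' : N_μ(m')>0} N_μ(m') · ‖μ̄_{m'} − ν̄_{m'}‖_TV ≤ (2 − δ(O)) · ‖μ − ν‖_TV. (This is the paper's Lemma 8 (prior_bound): the expected total variation between Bayes posteriors, where the observation is drawn from the μ-output distribution, is bounded by (2 − δ(O)) times the total variation between the priors.) -/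
/-!
For an observation `m'` put `a = O(·, m') μ`, `b = O(·, m') ν` with masses `A = N_μ(m')`,
`B = N_ν(m')`. The identity `A (a/A - b/B) = (a - b) + (b/B) (B - A)` bounds the `m'`-term by
`Σₓ O(x, m') |μ x - ν x| + |A - B|`. Summed over `m'`, the first part is `‖μ - ν‖` and the second
is `‖Oμ - Oν‖`, which Dobrushin's contraction bounds by `(1 - δ) ‖μ - ν‖`: if `s` is the common
mass of the positive and negative parts of `f = μ - ν`, then
`s • Of = Σ f⁺(x) f⁻(y) (O(x, ·) - O(y, ·))`, and each difference of rows has norm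
`2 - 2 Σ min ≤ 2 - 2δ`.
-/

open Finset

lemma abs_sub_eq_add_sub_two_mul_min (a b : ℝ) : |a - b| = a + b - 2 * min a b := by
  linarith [max_sub_min_eq_abs' a b, min_add_max a b]

lemma abs_mul_abs_div_sub_div_le {a b A B : ℝ} (hb : B = 0 → b = 0) :
    |A| * |a / A - b / B| ≤ |a - b| + |b / B| * |A - B| := by
  rcases eq_or_ne A 0 with rfl | hA
  · simp only [abs_zero, zero_mul]
    positivity
  rcases eq_or_ne B 0 with rfl | hB
  · simp [hb rfl, abs_div, mul_div_cancel₀, hA]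
  have hsplit : A * (a / A - b / B) = (a - b) + b / B * (B - A) := by
    field_simp
    ring
  calc |A| * |a / A - b / B| = |(a - b) + b / B * (B - A)| := by rw [← abs_mul, hsplit]
    _ ≤ |a - b| + |b / B| * |A - B| := by
      rw [abs_sub_comm A B, ← abs_mul]
      exact abs_add_le _ _

lemma abs_sum_mul_sum_abs_div_sum_sub_div_sum_le {ι : Type*} [Fintype ι] (a b : ι → ℝ)
    (hb : ∀ i, 0 ≤ b i) :
    |∑ i, a i| * ∑ i, |a i / ∑ j, a j - b i / ∑ j, b j|
      ≤ ∑ i, |a i - b i| + |∑ i, a i - ∑ i, b i| := by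
  have hb_zero : (∑ j, b j) = 0 → ∀ i, b i = 0 := fun h i =>
    (sum_eq_zero_iff_of_nonneg fun j _ => hb j).1 h i (mem_univ i)
  have hweights : ∑ i, |b i / ∑ j, b j| ≤ 1 := by
    simp_rw [abs_of_nonneg (div_nonneg (hb _) (sum_nonneg fun j _ => hb j))]
    rw [← sum_div]
    exact div_self_le_one _
  calc |∑ i, a i| * ∑ i, |a i / ∑ j, a j - b i / ∑ j, b j|
      ≤ ∑ i, (|a i - b i| + |b i / ∑ j, b j| * |∑ j, a j - ∑ j, b j|) := by
        rw [mul_sum]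
        exact sum_le_sum fun i _ => abs_mul_abs_div_sub_div_le fun h => hb_zero h i
    _ ≤ ∑ i, |a i - b i| + |∑ i, a i - ∑ i, b i| := by
        rw [sum_add_distrib, ← sum_mul]
        gcongr
        exact mul_le_of_le_one_left (abs_nonneg _) hweights

section Kernel

variable {X M : Type*} (O : X → M → ℝ)

lemma sum_abs_sub_eq_two_sub_two_mul_sum_min [Fintype M] (hO_sum : ∀ x, ∑ m, O x m = 1)
    (x y : X) :
    ∑ m, |O x m - O y m| = 2 - 2 * ∑ m, min (O x m) (O y m) := by
  simp_rw [abs_sub_eq_add_sub_two_mul_min, sum_sub_distrib, sum_add_distrib, ← mul_sum,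
    hO_sum]
  ring

lemma sum_sum_abs_mul_eq_sum_abs [Fintype X] [Fintype M] (hO_nonneg : ∀ x m, 0 ≤ O x m)
    (hO_sum : ∀ x, ∑ m, O x m = 1) (f : X → ℝ) :
    ∑ m, ∑ x, |O x m * f x| = ∑ x, |f x| := by
  simp_rw [abs_mul, abs_of_nonneg (hO_nonneg _ _)]
  rw [sum_comm]
  simp_rw [← sum_mul, hO_sum, one_mul]

lemma sum_posPart_mul_sum_mul_eq_sum_sum_mul_sub [Fintype X] {f : X → ℝ}
    (hf : ∑ x, (f x)⁺ = ∑ x, (f x)⁻) (m : M) :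
    (∑ x, (f x)⁺) * ∑ x, O x m * f x
      = ∑ x, ∑ y, (f x)⁺ * (f y)⁻ * (O x m - O y m) := by
  have hleft : ∑ x, ∑ y, (f x)⁺ * (f y)⁻ * O x m = (∑ x, O x m * (f x)⁺) * ∑ y, (f y)⁻ := by
    rw [sum_mul_sum]
    exact sum_congr rfl fun x _ => sum_congr rfl fun y _ => by ring
  have hright : ∑ x, ∑ y, (f x)⁺ * (f y)⁻ * O y m = (∑ x, (f x)⁺) * ∑ y, O y m * (f y)⁻ := by
    rw [sum_mul_sum]
    exact sum_congr rfl fun x _ => sum_congr rfl fun y _ => by ring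
  have hsplit : ∑ x, O x m * f x = ∑ x, O x m * (f x)⁺ - ∑ x, O x m * (f x)⁻ := by
    rw [← sum_sub_distrib]
    exact sum_congr rfl fun x _ => by rw [← mul_sub, posPart_sub_negPart]
  simp_rw [mul_sub, sum_sub_distrib]
  rw [hleft, hright, hsplit, ← hf]
  ring

theorem sum_abs_sum_mul_le_one_sub_mul_sum_abs [Fintype X] [Fintype M]
    (hO_sum : ∀ x, ∑ m, O x m = 1) {d : ℝ} (hd : ∀ x y, d ≤ ∑ m, min (O x m) (O y m))
    {f : X → ℝ} (hf : ∑ x, f x = 0) :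
    ∑ m, |∑ x, O x m * f x| ≤ (1 - d) * ∑ x, |f x| := by
  set s := ∑ x, (f x)⁺
  have hneg : ∑ x, (f x)⁻ = s := by
    have hsplit : ∑ x, f x = s - ∑ x, (f x)⁻ := by
      rw [← sum_sub_distrib]
      simp only [posPart_sub_negPart]
    linarith
  have habs : ∑ x, |f x| = 2 * s := by
    simp_rw [← posPart_add_negPart (f _), sum_add_distrib, hneg]
    ring
  have hs : 0 ≤ s := sum_nonneg fun x _ => posPart_nonneg _
  have hscaled : s * ∑ m, |∑ x, O x m * f x| ≤ s * ((1 - d) * ∑ x, |f x|) :=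
    calc s * ∑ m, |∑ x, O x m * f x|
        = ∑ m, |∑ x, ∑ y, (f x)⁺ * (f y)⁻ * (O x m - O y m)| := by
          rw [mul_sum]
          refine sum_congr rfl fun m _ => ?_
          rw [← sum_posPart_mul_sum_mul_eq_sum_sum_mul_sub O hneg.symm, abs_mul,
            abs_of_nonneg hs]
      _ ≤ ∑ m, ∑ x, ∑ y, (f x)⁺ * (f y)⁻ * |O x m - O y m| := by
          refine sum_le_sum fun m _ => (abs_sum_le_sum_abs _ _).trans ?_
          refine sum_le_sum fun x _ => (abs_sum_le_sum_abs _ _).trans_eq ?_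
          refine sum_congr rfl fun y _ => ?_
          rw [abs_mul, abs_of_nonneg (by positivity)]
      _ = ∑ x, ∑ y, (f x)⁺ * (f y)⁻ * (2 - 2 * ∑ m, min (O x m) (O y m)) := by
          simp_rw [← sum_abs_sub_eq_two_sub_two_mul_sum_min O hO_sum, mul_sum]
          rw [sum_comm]
          exact sum_congr rfl fun x _ => sum_comm
      _ ≤ ∑ x, ∑ y, (f x)⁺ * (f y)⁻ * (2 - 2 * d) := by
          gcongr with x _ y _
          exact hd x y
      _ = s * ((1 - d) * ∑ x, |f x|) := by
          simp_rw [mul_assoc, ← mul_sum, ← sum_mul, hneg, habs]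
          ring
  rcases hs.eq_or_lt with hs0 | hs_pos
  · have hf0 : ∀ x, f x = 0 := fun x => abs_eq_zero.1 <|
      (sum_eq_zero_iff_of_nonneg fun x _ => abs_nonneg (f x)).1 (by rw [habs, ← hs0, mul_zero])
        x (mem_univ x)
    simp [hf0]
  · exact le_of_mul_le_mul_left hscaled hs_pos

end Kernel

theorem bayes_posterior_expected_tv_dobrushin_bound_general
    {X M' : Type*} [Fintype X] [Fintype M'] [Nonempty X]
    (O : X → M' → ℝ) (hO_nonneg : ∀ x m', 0 ≤ O x m')
    (hO_sum : ∀ x, ∑ m', O x m' = 1)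
    (μ ν : X → ℝ)
    (hμ_sum : ∑ x, μ x = 1)
    (hν_nonneg : ∀ x, 0 ≤ ν x) (hν_sum : ∑ x, ν x = 1) :
    ∑ m' ∈ Finset.univ.filter (fun m' : M' => 0 < ∑ x, O x m' * μ x),
        (∑ x, O x m' * μ x) *
          (∑ x, |O x m' * μ x / (∑ y, O y m' * μ y)
                  - O x m' * ν x / (∑ y, O y m' * ν y)|)
      ≤ (2 - Finset.univ.inf' Finset.univ_nonempty
            (fun p : X × X => ∑ m', min (O p.1 m') (O p.2 m'))) *
          ∑ x, |μ x - ν x| := by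
  set δ := Finset.univ.inf' Finset.univ_nonempty
    (fun p : X × X => ∑ m', min (O p.1 m') (O p.2 m'))
  have hcontraction : ∑ m', |∑ x, O x m' * (μ x - ν x)| ≤ (1 - δ) * ∑ x, |μ x - ν x| :=
    sum_abs_sum_mul_le_one_sub_mul_sum_abs O hO_sum (fun x y => inf'_le _ (mem_univ (x, y)))
      (by rw [sum_sub_distrib, hμ_sum, hν_sum, sub_self])
  calc _ ≤ ∑ m' ∈ univ.filter (fun m' : M' => 0 < ∑ x, O x m' * μ x),
        (∑ x, |O x m' * (μ x - ν x)| + |∑ x, O x m' * (μ x - ν x)|) := by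
        refine sum_le_sum fun m' hm' => ?_
        simpa only [abs_of_pos (mem_filter.1 hm').2, mul_sub, sum_sub_distrib] using
          abs_sum_mul_sum_abs_div_sum_sub_div_sum_le (fun x => O x m' * μ x) _
            fun x => mul_nonneg (hO_nonneg x m') (hν_nonneg x)
    _ ≤ ∑ m', (∑ x, |O x m' * (μ x - ν x)| + |∑ x, O x m' * (μ x - ν x)|) :=
        sum_le_sum_of_subset_of_nonneg (filter_subset _ _) fun _ _ _ => by positivity
    _ ≤ ∑ x, |μ x - ν x| + (1 - δ) * ∑ x, |μ x - ν x| := by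
        rw [sum_add_distrib, sum_sum_abs_mul_eq_sum_abs O hO_nonneg hO_sum]
        exact add_le_add_right hcontraction _
    _ = (2 - δ) * ∑ x, |μ x - ν x| := by ring

/-- paper's Lemma 8: the expected total variation between Bayes
posteriors, with the observation drawn from the μ-output distribution, is
bounded by `(2 − δ(O))·‖μ − ν‖_TV`, where `δ(O)` is the Dobrushin coefficient
`min_{x,x'} Σ_{m'} min(O(m'|x), O(m'|x'))`. -/
theorem bayes_posterior_expected_tv_dobrushin_bound
    {X M' : Type*} [Fintype X] [Fintype M'] [Nonempty X] [Nonempty M']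
    (O : X → M' → ℝ) (hO_nonneg : ∀ x m', 0 ≤ O x m')
    (hO_sum : ∀ x, ∑ m', O x m' = 1)
    (μ ν : X → ℝ)
    (hμ_nonneg : ∀ x, 0 ≤ μ x) (hμ_sum : ∑ x, μ x = 1)
    (hν_nonneg : ∀ x, 0 ≤ ν x) (hν_sum : ∑ x, ν x = 1)
    (habs : ∀ x, 0 < μ x → 0 < ν x) :
    ∑ m' ∈ Finset.univ.filter (fun m' : M' => 0 < ∑ x, O x m' * μ x),
        (∑ x, O x m' * μ x) *
          (∑ x, |O x m' * μ x / (∑ y, O y m' * μ y)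
                  - O x m' * ν x / (∑ y, O y m' * ν y)|)
      ≤ (2 - Finset.univ.inf' Finset.univ_nonempty
            (fun p : X × X => ∑ m', min (O p.1 m') (O p.2 m'))) *
          ∑ x, |μ x - ν x| :=
  bayes_posterior_expected_tv_dobrushin_bound_general O hO_nonneg hO_sum μ ν hμ_sum hν_nonneg hν_sum
end

section
/- Let X, M, M' be nonempty finite sets, let T be a stochastic kernel from X to X, and let O be a stochastic kernel from M to M'. A quantizer is a function Q : X → M, and it induces the kernel O_Q from X to M' given by O_Q(m'|x) := O(m'|Q(x)). An observation-feedback policy is a family (q_t)_{t≥0} where q_t maps each observation history h ∈ (M')^t to a quantizer q_t(h). For a probability vector ρ on X define predictors recursively over histories: π^ρ_0(⟨⟩) := ρ, and for a history h ∈ (M')^t and m' ∈ M', with normalizer N^ρ_t(h, m') := Σ_{x∈X} O_{q_t(h)}(m'|x)·π^ρ_t(h)(x), set π^ρ_{t+1}(h⌢m')(x') := Σ_{x∈X} T(x'|x)·O_{q_t(h)}(m'|x)·π^ρ_t(h)(x)/N^ρ_t(h,m') when N^ρ_t(h,m') > 0, and π^ρ_{t+1}(h⌢m') := T applied to π^ρ_t(h)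 otherwise (a junk value on zero-probability branches). Define the path probability of h = (m'_0,…,m'_{t−1}) under prior μ as P^μ(h) := Π_{k=0}^{t−1} N^μ_k((m'_0,…,m'_{k−1}), m'_k). Suppose μ, ν are probability vectors on X with μ(x) > 0 implying ν(x) > 0 for all x, and set α := (1 − δ(T))·(2 − δ(O)). Then for every t ≥ 0 and every observation-feedback policy, Σ_{h∈(M')^t} P^μ(h) · ‖π^μ_t(h) − π^ν_t(h)‖_TV ≤ α^t · ‖μ − ν‖_TV. (This is the iterated, explicit finite-sum form of the paper's Corollary 3: exponential stability in expected total variation of the predictor process, uniformly over encoding policies.) -/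
open Finset

/-- The predictor process under an observation-feedback policy `q`.
`T x x'` denotes the source kernel `T(x'|x)`, `O m m'` the channel kernel
`O(m'|m)`; the quantizer at time `t` given history `h : Fin t → M'` is
`q t h : X → M`, and the induced kernel is `O_Q(m'|x) = O (Q x) m'`.
`pred T O q ρ t h` is the predictor `π^ρ_t(h)`; on zero-probability branches
(`N = 0`) it is defined as `T` applied to the previous predictor. -/
noncomputable def pred {X M M' : Type*} [Fintype X] [Fintype M']
    (T : X → X → ℝ) (O : M → M' → ℝ)
    (q : (t : ℕ) → (Fin t → M') → X → M) (ρ : X → ℝ) :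
    (t : ℕ) → (Fin t → M') → X → ℝ
  | 0, _ => ρ
  | t + 1, h =>
    let h' : Fin t → M' := fun i => h i.castSucc
    let m' : M' := h (Fin.last t)
    let prev : X → ℝ := pred T O q ρ t h'
    let N : ℝ := ∑ x, O (q t h' x) m' * prev x
    if 0 < N then
      fun x' => (∑ x, T x x' * O (q t h' x) m' * prev x) / N
    else
      fun x' => ∑ x, T x x' * prev x

/-- The probability `P^ρ(h)` of an observation history `h` under prior `ρ` and
policy `q`: the product of the successive normalizers. -/
noncomputable def pathProb {X M M' : Type*} [Fintype X] [Fintype M']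
    (T : X → X → ℝ) (O : M → M' → ℝ)
    (q : (t : ℕ) → (Fin t → M') → X → M) (ρ : X → ℝ) :
    (t : ℕ) → (Fin t → M') → ℝ
  | 0, _ => 1
  | t + 1, h =>
    let h' : Fin t → M' := fun i => h i.castSucc
    pathProb T O q ρ t h' *
      ∑ x, O (q t h' x) (h (Fin.last t)) * pred T O q ρ t h' x

/-!
Observing `m'` and then moving by `T` sends a predictor `ρ` to `T φ`, where `φ` is `ρ` reweighted
by the likelihood `x ↦ O(m'|Q x)` and normalized by `N(m')`. Writing `u`, `v` for the
unnormalized reweightings of two predictors, `N_μ (φ_μ - φ_ν) = (u - v) + (N_ν - N_μ) φ_ν`, so the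
`N_μ`-weighted distance of the filters is at most `‖u - v‖ + |N_μ - N_ν|`. Summed over `m'`, the
first terms add up to `‖μ - ν‖`, and the second are the total variation of the image of `μ - ν`
under the kernel `x ↦ O(·|Q x)`, hence at most `(1 - δ(O)) ‖μ - ν‖` by Dobrushin's contraction.
Applying `T` contracts once more by `1 - δ(T)`; induction on the length of the history iterates
the factor `α`.
-/

section Dobrushin

variable {A B : Type*}

noncomputable def dobrushinCoeff [Fintype A] [Nonempty A] [Fintype B] (K : A → B → ℝ) : ℝ :=
  univ.inf' univ_nonempty fun p : A × A => ∑ b, min (K p.1 b) (K p.2 b)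

theorem dobrushinCoeff_le [Fintype A] [Nonempty A] [Fintype B] (K : A → B → ℝ) (a a' : A) :
    dobrushinCoeff K ≤ ∑ b, min (K a b) (K a' b) :=
  inf'_le _ (mem_univ (a, a'))

theorem le_one_of_le_sum_min [Nonempty A] [Fintype B] {K : A → B → ℝ}
    (hK : ∀ a, ∑ b, K a b = 1) {δ : ℝ} (hδ : ∀ a a', δ ≤ ∑ b, min (K a b) (K a' b)) : δ ≤ 1 := by
  obtain ⟨a⟩ := ‹Nonempty A›
  simpa [hK a] using hδ a a

theorem dobrushinCoeff_le_one [Fintype A] [Nonempty A] [Fintype B] {K : A → B → ℝ}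
    (hK : ∀ a, ∑ b, K a b = 1) : dobrushinCoeff K ≤ 1 :=
  le_one_of_le_sum_min hK (dobrushinCoeff_le K)

theorem sum_abs_sub_eq_two_sub_two_mul_sum_min_s7 [Fintype B] {p p' : B → ℝ} (hp : ∑ b, p b = 1)
    (hp' : ∑ b, p' b = 1) : ∑ b, |p b - p' b| = 2 - 2 * ∑ b, min (p b) (p' b) := by
  have h : ∀ b, |p b - p' b| = p b + p' b - 2 * min (p b) (p' b) := fun b => by
    linarith [max_sub_min_eq_abs (p' b) (p b), min_add_max (p' b) (p b), min_comm (p b) (p' b)]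
  simp only [h, sum_sub_distrib, sum_add_distrib, ← mul_sum, hp, hp']
  ring

theorem sum_negPart_eq_sum_posPart [Fintype A] {l : A → ℝ} (hl : ∑ a, l a = 0) :
    ∑ a, (l a)⁻ = ∑ a, (l a)⁺ := by
  have : ∑ a, ((l a)⁺ - (l a)⁻) = 0 := by simpa only [posPart_sub_negPart] using hl
  rw [sum_sub_distrib] at this
  linarith

theorem sum_abs_eq_two_mul_sum_posPart [Fintype A] {l : A → ℝ} (hl : ∑ a, l a = 0) :
    ∑ a, |l a| = 2 * ∑ a, (l a)⁺ := by
  simp only [← posPart_add_negPart, sum_add_distrib, sum_negPart_eq_sum_posPart hl]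
  ring

theorem sum_posPart_mul_sum_mul_eq [Fintype A] (K : A → B → ℝ) {l : A → ℝ} (hl : ∑ a, l a = 0)
    (b : B) :
    (∑ a, (l a)⁺) * ∑ a, K a b * l a =
      ∑ a, ∑ a', (K a b - K a' b) * ((l a)⁺ * (l a')⁻) := by
  have hsplit : ∑ a, K a b * l a = ∑ a, K a b * (l a)⁺ - ∑ a, K a b * (l a)⁻ := by
    simp only [← sum_sub_distrib, ← mul_sub, posPart_sub_negPart]
  have hrhs : ∑ a, ∑ a', (K a b - K a' b) * ((l a)⁺ * (l a')⁻) =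
      (∑ a, K a b * (l a)⁺) * ∑ a', (l a')⁻ - (∑ a, (l a)⁺) * ∑ a', K a' b * (l a')⁻ := by
    simp only [sum_mul_sum, ← sum_sub_distrib]
    exact sum_congr rfl fun _ _ => sum_congr rfl fun _ _ => by ring
  rw [hrhs, hsplit, sum_negPart_eq_sum_posPart hl]
  ring

/-- Dobrushin's contraction of signed measures of total mass zero. -/
theorem sum_abs_sum_mul_le_of_sum_eq_zero [Fintype A] [Fintype B] {K : A → B → ℝ}
    (hK : ∀ a, ∑ b, K a b = 1) {δ : ℝ} (hδ : ∀ a a', δ ≤ ∑ b, min (K a b) (K a' b))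
    {l : A → ℝ} (hl : ∑ a, l a = 0) :
    ∑ b, |∑ a, K a b * l a| ≤ (1 - δ) * ∑ a, |l a| := by
  set s := ∑ a, (l a)⁺
  have habs := sum_abs_eq_two_mul_sum_posPart hl
  rcases (sum_nonneg fun a _ => posPart_nonneg (l a) : 0 ≤ s).eq_or_lt with hs | hs
  · have hl0 : ∀ a, l a = 0 := fun a => abs_eq_zero.1 <|
      (sum_eq_zero_iff_of_nonneg fun a _ => abs_nonneg (l a)).1 (by rw [habs, ← hs, mul_zero]) a
        (mem_univ a)
    simp [hl0]
  have hw : ∀ a a', 0 ≤ (l a)⁺ * (l a')⁻ := fun a a' =>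
    mul_nonneg (posPart_nonneg _) (negPart_nonneg _)
  refine le_of_mul_le_mul_left ?_ hs
  calc s * ∑ b, |∑ a, K a b * l a|
      = ∑ b, |∑ a, ∑ a', (K a b - K a' b) * ((l a)⁺ * (l a')⁻)| := by
        rw [mul_sum]
        refine sum_congr rfl fun b _ => ?_
        rw [← sum_posPart_mul_sum_mul_eq K hl, abs_mul, abs_of_pos hs]
    _ ≤ ∑ b, ∑ a, ∑ a', |K a b - K a' b| * ((l a)⁺ * (l a')⁻) := by
        gcongr with b
        refine (abs_sum_le_sum_abs _ _).trans (sum_le_sum fun a _ => ?_)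
        refine (abs_sum_le_sum_abs _ _).trans (sum_le_sum fun a' _ => ?_)
        rw [abs_mul, abs_of_nonneg (hw a a')]
    _ = ∑ a, ∑ a', (∑ b, |K a b - K a' b|) * ((l a)⁺ * (l a')⁻) := by
        rw [sum_comm]
        refine sum_congr rfl fun a _ => ?_
        rw [sum_comm]
        simp only [sum_mul]
    _ ≤ ∑ a, ∑ a', 2 * (1 - δ) * ((l a)⁺ * (l a')⁻) := by
        gcongr with a _ a' _
        rw [sum_abs_sub_eq_two_sub_two_mul_sum_min_s7 (hK a) (hK a')]
        linarith [hδ a a']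
    _ = s * ((1 - δ) * ∑ a, |l a|) := by
        simp only [← mul_sum, ← sum_mul, sum_negPart_eq_sum_posPart hl, habs]
        ring

end Dobrushin

theorem sum_mul_sum_abs_sub_le {X : Type*} [Fintype X] {u v p p' : X → ℝ}
    (hu : ∀ x, u x = (∑ y, u y) * p x) (hv : ∀ x, v x = (∑ y, v y) * p' x)
    (hp'_nonneg : ∀ x, 0 ≤ p' x) (hp'_sum : ∑ x, p' x = 1) :
    (∑ x, u x) * ∑ x, |p x - p' x| ≤ ∑ x, |u x - v x| + |∑ x, u x - ∑ x, v x| := by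
  set U := ∑ x, u x
  set V := ∑ x, v x
  have hsplit : ∀ x, U * (p x - p' x) = (u x - v x) + (V - U) * p' x := fun x => by
    rw [hu x, hv x]; ring
  calc U * ∑ x, |p x - p' x| ≤ ∑ x, |U * (p x - p' x)| := by
        rw [mul_sum]
        exact sum_le_sum fun x _ => by
          rw [abs_mul]; exact mul_le_mul_of_nonneg_right (le_abs_self U) (abs_nonneg _)
    _ ≤ ∑ x, (|u x - v x| + |U - V| * p' x) := by
        refine sum_le_sum fun x _ => ?_
        rw [hsplit, abs_sub_comm U V]
        refine (abs_add_le _ _).trans ?_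
        rw [abs_mul, abs_of_nonneg (hp'_nonneg x)]
    _ = ∑ x, |u x - v x| + |U - V| := by rw [sum_add_distrib, ← mul_sum, hp'_sum, mul_one]

section BayesFilter

variable {X : Type*} [Fintype X]

/-- On an observation of probability zero the prior is kept; `mul_eq_sum_mul_bayesFilter` holds
in both cases. -/
noncomputable def bayesFilter (w ρ : X → ℝ) : X → ℝ :=
  if 0 < ∑ x, w x * ρ x then fun x => w x * ρ x / ∑ y, w y * ρ y else ρ

theorem bayesFilter_nonneg {w ρ : X → ℝ} (hw : ∀ x, 0 ≤ w x) (hρ : ∀ x, 0 ≤ ρ x) (x : X) :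
    0 ≤ bayesFilter w ρ x := by
  unfold bayesFilter
  split_ifs with hN
  · exact div_nonneg (mul_nonneg (hw x) (hρ x)) hN.le
  · exact hρ x

theorem sum_bayesFilter {w ρ : X → ℝ} (hρ : ∑ x, ρ x = 1) : ∑ x, bayesFilter w ρ x = 1 := by
  unfold bayesFilter
  split_ifs with hN
  · rw [← sum_div, div_self hN.ne']
  · exact hρ

theorem mul_eq_sum_mul_bayesFilter {w ρ : X → ℝ} (hw : ∀ x, 0 ≤ w x) (hρ : ∀ x, 0 ≤ ρ x)
    (x : X) : w x * ρ x = (∑ y, w y * ρ y) * bayesFilter w ρ x := by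
  have hwρ : ∀ y ∈ univ, 0 ≤ w y * ρ y := fun y _ => mul_nonneg (hw y) (hρ y)
  unfold bayesFilter
  split_ifs with hN
  · rw [mul_div_cancel₀ _ hN.ne']
  · have hN0 : ∑ y, w y * ρ y = 0 := le_antisymm (not_lt.1 hN) (sum_nonneg hwρ)
    rw [hN0, zero_mul, (sum_eq_zero_iff_of_nonneg hwρ).1 hN0 x (mem_univ x)]

theorem sum_mul_sum_abs_sum_mul_bayesFilter_sub_le [Nonempty X] {T : X → X → ℝ}
    (hT_sum : ∀ x, ∑ x', T x x' = 1) {δ : ℝ} (hδ : ∀ x y, δ ≤ ∑ x', min (T x x') (T y x'))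
    {w a b : X → ℝ} (hw : ∀ x, 0 ≤ w x) (ha_nonneg : ∀ x, 0 ≤ a x) (ha_sum : ∑ x, a x = 1)
    (hb_nonneg : ∀ x, 0 ≤ b x) (hb_sum : ∑ x, b x = 1) :
    (∑ x, w x * a x) *
        ∑ x', |∑ x, T x x' * bayesFilter w a x - ∑ x, T x x' * bayesFilter w b x|
      ≤ (1 - δ) * (∑ x, w x * |a x - b x| + |∑ x, w x * a x - ∑ x, w x * b x|) := by
  have hT_contr : ∑ x', |∑ x, T x x' * bayesFilter w a x - ∑ x, T x x' * bayesFilter w b x|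
      ≤ (1 - δ) * ∑ x, |bayesFilter w a x - bayesFilter w b x| := by
    simp only [← sum_sub_distrib, ← mul_sub]
    refine sum_abs_sum_mul_le_of_sum_eq_zero hT_sum hδ ?_
    rw [sum_sub_distrib, sum_bayesFilter ha_sum, sum_bayesFilter hb_sum, sub_self]
  have hnormalize := sum_mul_sum_abs_sub_le (mul_eq_sum_mul_bayesFilter hw ha_nonneg)
    (mul_eq_sum_mul_bayesFilter hw hb_nonneg) (bayesFilter_nonneg hw hb_nonneg)
    (sum_bayesFilter hb_sum)
  simp only [← mul_sub, abs_mul, abs_of_nonneg (hw _)] at hnormalize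
  have hδ1 : 0 ≤ 1 - δ := sub_nonneg.2 (le_one_of_le_sum_min hT_sum hδ)
  have hN : 0 ≤ ∑ x, w x * a x := sum_nonneg fun x _ => mul_nonneg (hw x) (ha_nonneg x)
  calc _ ≤ (∑ x, w x * a x) * ((1 - δ) * ∑ x, |bayesFilter w a x - bayesFilter w b x|) :=
        mul_le_mul_of_nonneg_left hT_contr hN
    _ = (1 - δ) * ((∑ x, w x * a x) * ∑ x, |bayesFilter w a x - bayesFilter w b x|) := by ring
    _ ≤ _ := mul_le_mul_of_nonneg_left hnormalize hδ1

end BayesFilter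

theorem sum_sum_mul_sum_abs_sum_mul_bayesFilter_sub_le {X M M' : Type*} [Fintype X] [Fintype M]
    [Fintype M'] [Nonempty X] [Nonempty M] {T : X → X → ℝ} (hT_sum : ∀ x, ∑ x', T x x' = 1)
    {O : M → M' → ℝ} (hO_nonneg : ∀ m m', 0 ≤ O m m') (hO_sum : ∀ m, ∑ m', O m m' = 1)
    (Q : X → M) {a b : X → ℝ} (ha_nonneg : ∀ x, 0 ≤ a x) (ha_sum : ∑ x, a x = 1)
    (hb_nonneg : ∀ x, 0 ≤ b x) (hb_sum : ∑ x, b x = 1) :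
    ∑ m', (∑ x, O (Q x) m' * a x) *
        ∑ x', |∑ x, T x x' * bayesFilter (fun x => O (Q x) m') a x
          - ∑ x, T x x' * bayesFilter (fun x => O (Q x) m') b x|
      ≤ (1 - dobrushinCoeff T) * (2 - dobrushinCoeff O) * ∑ x, |a x - b x| := by
  have hδO : ∀ x y, dobrushinCoeff O ≤ ∑ m', min (O (Q x) m') (O (Q y) m') :=
    fun x y => dobrushinCoeff_le O (Q x) (Q y)
  have hchannel : ∑ m', ∑ x, O (Q x) m' * |a x - b x| = ∑ x, |a x - b x| := by
    rw [sum_comm]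
    simp only [← sum_mul, hO_sum, one_mul]
  have hnormalizers : ∑ m', |∑ x, O (Q x) m' * a x - ∑ x, O (Q x) m' * b x|
      ≤ (1 - dobrushinCoeff O) * ∑ x, |a x - b x| := by
    simp only [← sum_sub_distrib, ← mul_sub]
    refine sum_abs_sum_mul_le_of_sum_eq_zero (fun x => hO_sum (Q x)) hδO ?_
    rw [sum_sub_distrib, ha_sum, hb_sum, sub_self]
  have hδT : 0 ≤ 1 - dobrushinCoeff T := sub_nonneg.2 (dobrushinCoeff_le_one hT_sum)
  calc _ ≤ ∑ m', (1 - dobrushinCoeff T) * (∑ x, O (Q x) m' * |a x - b x|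
          + |∑ x, O (Q x) m' * a x - ∑ x, O (Q x) m' * b x|) :=
        sum_le_sum fun m' _ => sum_mul_sum_abs_sum_mul_bayesFilter_sub_le hT_sum
          (dobrushinCoeff_le T) (fun x => hO_nonneg _ _) ha_nonneg ha_sum hb_nonneg hb_sum
    _ = (1 - dobrushinCoeff T) * (∑ x, |a x - b x|
          + ∑ m', |∑ x, O (Q x) m' * a x - ∑ x, O (Q x) m' * b x|) := by
        rw [← mul_sum, sum_add_distrib, hchannel]
    _ ≤ (1 - dobrushinCoeff T) *
          (∑ x, |a x - b x| + (1 - dobrushinCoeff O) * ∑ x, |a x - b x|) := by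
        gcongr
    _ = _ := by ring

section Predictor

variable {X M M' : Type*} [Fintype X] [Fintype M'] (T : X → X → ℝ) (O : M → M' → ℝ)
  (q : (t : ℕ) → (Fin t → M') → X → M)

theorem pred_snoc (ρ : X → ℝ) (t : ℕ) (h : Fin t → M') (m' : M') (x' : X) :
    pred T O q ρ (t + 1) (Fin.snoc h m') x' =
      ∑ x, T x x' * bayesFilter (fun x => O (q t h x) m') (pred T O q ρ t h) x := by
  have hinit : (fun i : Fin t => (Fin.snoc h m' : Fin (t + 1) → M') i.castSucc) = h :=
    funext fun i => Fin.snoc_castSucc ..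
  simp only [pred, hinit, Fin.snoc_last, bayesFilter]
  split_ifs
  · simp only [sum_div, mul_div_assoc, mul_assoc]
  · rfl

theorem pathProb_snoc (ρ : X → ℝ) (t : ℕ) (h : Fin t → M') (m' : M') :
    pathProb T O q ρ (t + 1) (Fin.snoc h m') =
      pathProb T O q ρ t h * ∑ x, O (q t h x) m' * pred T O q ρ t h x := by
  have hinit : (fun i : Fin t => (Fin.snoc h m' : Fin (t + 1) → M') i.castSucc) = h :=
    funext fun i => Fin.snoc_castSucc ..
  simp only [pathProb, hinit, Fin.snoc_last]

variable {T O}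

theorem pred_nonneg_and_sum_eq_one (hT_nonneg : ∀ x x', 0 ≤ T x x')
    (hT_sum : ∀ x, ∑ x', T x x' = 1) (hO_nonneg : ∀ m m', 0 ≤ O m m') {ρ : X → ℝ}
    (hρ_nonneg : ∀ x, 0 ≤ ρ x) (hρ_sum : ∑ x, ρ x = 1) (t : ℕ) (h : Fin t → M') :
    (∀ x, 0 ≤ pred T O q ρ t h x) ∧ ∑ x, pred T O q ρ t h x = 1 := by
  induction t with
  | zero => exact ⟨hρ_nonneg, hρ_sum⟩
  | succ t ih =>
    obtain ⟨h, m', rfl⟩ : ∃ h' m', h = Fin.snoc h' m' :=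
      ⟨Fin.init h, h (Fin.last t), (Fin.snoc_init_self h).symm⟩
    obtain ⟨hprev_nonneg, hprev_sum⟩ := ih h
    have hfilter_nonneg :=
      bayesFilter_nonneg (fun x => hO_nonneg (q t h x) m') hprev_nonneg
    refine ⟨fun x' => ?_, ?_⟩
    · rw [pred_snoc]
      exact sum_nonneg fun x _ => mul_nonneg (hT_nonneg x x') (hfilter_nonneg x)
    · simp only [pred_snoc]
      rw [sum_comm]
      simp only [← sum_mul, hT_sum, one_mul]
      exact sum_bayesFilter hprev_sum

theorem pathProb_nonneg (hT_nonneg : ∀ x x', 0 ≤ T x x') (hT_sum : ∀ x, ∑ x', T x x' = 1)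
    (hO_nonneg : ∀ m m', 0 ≤ O m m') {ρ : X → ℝ} (hρ_nonneg : ∀ x, 0 ≤ ρ x)
    (hρ_sum : ∑ x, ρ x = 1) (t : ℕ) (h : Fin t → M') : 0 ≤ pathProb T O q ρ t h := by
  induction t with
  | zero => exact zero_le_one
  | succ t ih =>
    obtain ⟨h, m', rfl⟩ : ∃ h' m', h = Fin.snoc h' m' :=
      ⟨Fin.init h, h (Fin.last t), (Fin.snoc_init_self h).symm⟩
    rw [pathProb_snoc]
    have hprev :=
      (pred_nonneg_and_sum_eq_one q hT_nonneg hT_sum hO_nonneg hρ_nonneg hρ_sum t h).1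
    exact mul_nonneg (ih _) (sum_nonneg fun x _ => mul_nonneg (hO_nonneg _ _) (hprev x))

end Predictor

theorem sum_pi_fin_succ_eq_sum_sum_snoc {β M' : Type*} [AddCommMonoid β] [Fintype M'] {t : ℕ}
    (f : (Fin (t + 1) → M') → β) :
    ∑ h, f h = ∑ h : Fin t → M', ∑ m', f (Fin.snoc h m') := by
  rw [← Fintype.sum_equiv (Fin.snocEquiv fun _ => M') (fun p => f (Fin.snoc p.2 p.1)) f
    fun _ => rfl, Fintype.sum_prod_type, sum_comm]

theorem sum_pathProb_mul_sum_abs_pred_sub_succ_le {X M M' : Type*} [Fintype X] [Fintype M]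
    [Fintype M'] [Nonempty X] [Nonempty M] {T : X → X → ℝ} (hT_nonneg : ∀ x x', 0 ≤ T x x')
    (hT_sum : ∀ x, ∑ x', T x x' = 1) {O : M → M' → ℝ} (hO_nonneg : ∀ m m', 0 ≤ O m m')
    (hO_sum : ∀ m, ∑ m', O m m' = 1) (q : (t : ℕ) → (Fin t → M') → X → M) {μ ν : X → ℝ}
    (hμ_nonneg : ∀ x, 0 ≤ μ x) (hμ_sum : ∑ x, μ x = 1)
    (hν_nonneg : ∀ x, 0 ≤ ν x) (hν_sum : ∑ x, ν x = 1) (t : ℕ) :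
    ∑ h : Fin (t + 1) → M',
        pathProb T O q μ (t + 1) h * ∑ x, |pred T O q μ (t + 1) h x - pred T O q ν (t + 1) h x|
      ≤ (1 - dobrushinCoeff T) * (2 - dobrushinCoeff O) *
        ∑ h : Fin t → M',
          pathProb T O q μ t h * ∑ x, |pred T O q μ t h x - pred T O q ν t h x| := by
  rw [sum_pi_fin_succ_eq_sum_sum_snoc, mul_sum]
  refine sum_le_sum fun h _ => ?_
  obtain ⟨hμ_nonneg', hμ_sum'⟩ :=
    pred_nonneg_and_sum_eq_one q hT_nonneg hT_sum hO_nonneg hμ_nonneg hμ_sum t h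
  obtain ⟨hν_nonneg', hν_sum'⟩ :=
    pred_nonneg_and_sum_eq_one q hT_nonneg hT_sum hO_nonneg hν_nonneg hν_sum t h
  simp only [pathProb_snoc, pred_snoc, mul_assoc, ← mul_sum]
  refine (mul_le_mul_of_nonneg_left
    (sum_sum_mul_sum_abs_sum_mul_bayesFilter_sub_le hT_sum hO_nonneg hO_sum (q t h)
      hμ_nonneg' hμ_sum' hν_nonneg' hν_sum')
    (pathProb_nonneg q hT_nonneg hT_sum hO_nonneg hμ_nonneg hμ_sum t h)).trans_eq ?_
  ring

theorem predictor_exponential_stability_general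
    {X M M' : Type*} [Fintype X] [Fintype M] [Fintype M']
    [Nonempty X] [Nonempty M]
    (T : X → X → ℝ) (hT_nonneg : ∀ x x', 0 ≤ T x x')
    (hT_sum : ∀ x, ∑ x', T x x' = 1)
    (O : M → M' → ℝ) (hO_nonneg : ∀ m m', 0 ≤ O m m')
    (hO_sum : ∀ m, ∑ m', O m m' = 1)
    (q : (t : ℕ) → (Fin t → M') → X → M)
    (μ ν : X → ℝ)
    (hμ_nonneg : ∀ x, 0 ≤ μ x) (hμ_sum : ∑ x, μ x = 1)
    (hν_nonneg : ∀ x, 0 ≤ ν x) (hν_sum : ∑ x, ν x = 1)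
    (α : ℝ)
    (hα : α = (1 - Finset.univ.inf' Finset.univ_nonempty
                  (fun p : X × X => ∑ x', min (T p.1 x') (T p.2 x'))) *
              (2 - Finset.univ.inf' Finset.univ_nonempty
                  (fun p : M × M => ∑ m', min (O p.1 m') (O p.2 m')))) :
    ∀ t : ℕ,
      ∑ h : Fin t → M',
          pathProb T O q μ t h *
            (∑ x, |pred T O q μ t h x - pred T O q ν t h x|)
        ≤ α ^ t * ∑ x, |μ x - ν x| := by
  change α = (1 - dobrushinCoeff T) * (2 - dobrushinCoeff O) at hα
  have hα_nonneg : 0 ≤ α := hα ▸ mul_nonneg (sub_nonneg.2 (dobrushinCoeff_le_one hT_sum))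
    (by linarith [dobrushinCoeff_le_one hO_sum])
  intro t
  induction t with
  | zero => simp [pathProb, pred]
  | succ t ih =>
    calc _ ≤ α * ∑ h : Fin t → M',
            pathProb T O q μ t h * ∑ x, |pred T O q μ t h x - pred T O q ν t h x| :=
          hα ▸ sum_pathProb_mul_sum_abs_pred_sub_succ_le hT_nonneg hT_sum hO_nonneg hO_sum q
            hμ_nonneg hμ_sum hν_nonneg hν_sum t
      _ ≤ α * (α ^ t * ∑ x, |μ x - ν x|) := mul_le_mul_of_nonneg_left ih hα_nonneg
      _ = α ^ (t + 1) * ∑ x, |μ x - ν x| := by ring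

/-- iterated form of the paper's Corollary 3: exponential
stability in expected total variation of the predictor process, uniformly over
observation-feedback encoding policies, with rate
`α = (1 − δ(T))·(2 − δ(O))`. -/
theorem predictor_exponential_stability
    {X M M' : Type*} [Fintype X] [Fintype M] [Fintype M']
    [Nonempty X] [Nonempty M] [Nonempty M']
    (T : X → X → ℝ) (hT_nonneg : ∀ x x', 0 ≤ T x x')
    (hT_sum : ∀ x, ∑ x', T x x' = 1)
    (O : M → M' → ℝ) (hO_nonneg : ∀ m m', 0 ≤ O m m')
    (hO_sum : ∀ m, ∑ m', O m m' = 1)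
    (q : (t : ℕ) → (Fin t → M') → X → M)
    (μ ν : X → ℝ)
    (hμ_nonneg : ∀ x, 0 ≤ μ x) (hμ_sum : ∑ x, μ x = 1)
    (hν_nonneg : ∀ x, 0 ≤ ν x) (hν_sum : ∑ x, ν x = 1)
    (habs : ∀ x, 0 < μ x → 0 < ν x)
    (α : ℝ)
    (hα : α = (1 - Finset.univ.inf' Finset.univ_nonempty
                  (fun p : X × X => ∑ x', min (T p.1 x') (T p.2 x'))) *
              (2 - Finset.univ.inf' Finset.univ_nonempty
                  (fun p : M × M => ∑ m', min (O p.1 m') (O p.2 m')))) :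
    ∀ t : ℕ,
      ∑ h : Fin t → M',
          pathProb T O q μ t h *
            (∑ x, |pred T O q μ t h x - pred T O q ν t h x|)
        ≤ α ^ t * ∑ x, |μ x - ν x| :=
  predictor_exponential_stability_general T hT_nonneg hT_sum O hO_nonneg hO_sum q μ ν hμ_nonneg
    hμ_sum hν_nonneg hν_sum α hα
end
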